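/- arXiv:0901.1226 — 3 statements merged into one kernel-verified Lean document; each statement's English description precedes it below -/
import Mathlib

section
/- The limit as γ → 1 of [α₀·(−iω)^γ / cos(πγ/2) + i·α₀·tan(πγ/2)·|ω₀|^{γ−1}·ω] equals α₀·|ω| + i·α₀·(2/π)·ω·(log|ω| − log|ω₀|), for any fixed ω ≠ 0 and ω₀ > 0. -/
/-!
Since `-iω = |ω| e^{∓iπ/2}` (sign `∓ = sgn ω`), the first term equals
`α₀|ω|^γ - iα₀ω|ω|^{γ-1} tan(πγ/2)`, so the two divergent tangent terms combine into
`iα₀ω · sin(πγ/2) · (|ω₀|^{γ-1} - |ω|^{γ-1}) / cos(πγ/2)`. The last quotient is `0/0` at `γ = 1`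
and tends to the ratio of derivatives `(log|ω₀| - log|ω|) / (-π/2)`.
-/

open Real Filter Complex Topology

theorem tendsto_div_nhdsNE_of_hasDerivAt {f g : ℝ → ℝ} {f' g' x : ℝ} (hf : HasDerivAt f f' x)
    (hg : HasDerivAt g g' x) (hfx : f x = 0) (hgx : g x = 0) (hg' : g' ≠ 0) :
    Tendsto (fun y => f y / g y) (𝓝[≠] x) (𝓝 (f' / g')) := by
  refine ((hasDerivAt_iff_tendsto_slope.1 hf).div (hasDerivAt_iff_tendsto_slope.1 hg) hg').congr'
    ?_
  filter_upwards [self_mem_nhdsWithin] with y hy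
  simp only [Pi.div_apply, slope_def_field, hfx, hgx, sub_zero]
  exact div_div_div_cancel_right₀ (sub_ne_zero.2 hy) _ _

theorem hasDerivAt_cos_pi_mul_div_two :
    HasDerivAt (fun γ : ℝ => Real.cos (π * γ / 2)) (-(π / 2)) 1 := by
  have h := ((hasDerivAt_id (1 : ℝ)).const_mul π).div_const 2 |>.cos
  simpa [mul_div_assoc] using h

theorem hasDerivAt_rpow_sub_one_sub_rpow_sub_one {a b : ℝ} (ha : 0 < a) (hb : 0 < b) :
    HasDerivAt (fun γ : ℝ => a ^ (γ - 1) - b ^ (γ - 1)) (Real.log a - Real.log b) 1 := by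
  have h {c : ℝ} (hc : 0 < c) : HasDerivAt (fun γ : ℝ => c ^ (γ - 1)) (Real.log c) 1 := by
    simpa using ((hasDerivAt_id' (1 : ℝ)).sub_const 1).const_rpow hc
  exact (h ha).sub (h hb)

theorem tendsto_tan_mul_rpow_sub_rpow {a b : ℝ} (ha : 0 < a) (hb : 0 < b) :
    Tendsto (fun γ : ℝ => Real.tan (π * γ / 2) * (a ^ (γ - 1) - b ^ (γ - 1))) (𝓝[≠] 1)
      (𝓝 (2 / π * (Real.log b - Real.log a))) := by
  have hsin : Tendsto (fun γ : ℝ => Real.sin (π * γ / 2)) (𝓝[≠] 1) (𝓝 1) := by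
    have h : Continuous fun γ : ℝ => Real.sin (π * γ / 2) := by fun_prop
    simpa using h.continuousWithinAt.tendsto (x := 1) (s := {1}ᶜ)
  have hquot := tendsto_div_nhdsNE_of_hasDerivAt (hasDerivAt_rpow_sub_one_sub_rpow_sub_one ha hb)
    hasDerivAt_cos_pi_mul_div_two (by simp) (by simp) (neg_ne_zero.2 (by positivity))
  convert hsin.mul hquot using 2 with γ
  · rw [Real.tan_eq_sin_div_cos]
    ring
  · field_simp
    ring

theorem neg_I_mul_ofReal_cpow {x : ℝ} (hx : x ≠ 0) (γ : ℝ) :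
    (-I * x) ^ (γ : ℂ) = ((|x| ^ γ * Real.cos (π * γ / 2) : ℝ) : ℂ)
      - I * ((x * |x| ^ (γ - 1) * Real.sin (π * γ / 2) : ℝ) : ℂ) := by
  have hnorm : ‖-I * x‖ = |x| := by simp
  rw [cpow_ofReal, hnorm, Real.rpow_sub_one (abs_ne_zero.2 hx)]
  rcases hx.lt_or_gt with hneg | hpos
  · have harg : arg (-I * x) = π / 2 := by
      rw [show -I * (x : ℂ) = ((-x : ℝ) : ℂ) * I by push_cast; ring,
        arg_real_mul _ (neg_pos.2 hneg), arg_I]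
    rw [harg, abs_of_neg hneg]
    field_simp
    push_cast
    ring
  · have harg : arg (-I * x) = -(π / 2) := by
      rw [mul_comm, arg_real_mul _ hpos, arg_neg_I]
    rw [harg, abs_of_pos hpos, neg_mul, Real.cos_neg, Real.sin_neg]
    field_simp
    push_cast
    ring

theorem ofReal_mul_neg_I_mul_cpow_div_cos_add {x : ℝ} (hx : x ≠ 0) (α a : ℝ) {γ : ℝ}
    (hcos : Real.cos (π * γ / 2) ≠ 0) :
    (α : ℂ) * (-I * x) ^ (γ : ℂ) / (Real.cos (π * γ / 2) : ℂ)
        + I * α * (Real.tan (π * γ / 2) : ℂ) * ((a ^ (γ - 1) : ℝ) : ℂ) * x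
      = ((α * |x| ^ γ : ℝ) : ℂ)
        + I * α * x * ((Real.tan (π * γ / 2) * (a ^ (γ - 1) - |x| ^ (γ - 1)) : ℝ) : ℂ) := by
  have hcos' : (Real.cos (π * γ / 2) : ℂ) ≠ 0 := ofReal_ne_zero.2 hcos
  rw [neg_I_mul_ofReal_cpow hx, Real.tan_eq_sin_div_cos]
  simp only [ofReal_mul, ofReal_sub, ofReal_div]
  field_simp
  ring

theorem alpha_star_limit_gamma_one_general (α₀ ω₀ ω : ℝ) (hω₀ : 0 < ω₀)
    (hω : ω ≠ 0) :
    Tendsto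
      (fun γ : ℝ =>
        (α₀ : ℂ) * ((-Complex.I) * (ω : ℂ)) ^ (γ : ℂ) / (Real.cos (π * γ / 2) : ℂ)
          + Complex.I * (α₀ : ℂ) * (Real.tan (π * γ / 2) : ℂ)
              * ((|ω₀| ^ (γ - 1) : ℝ) : ℂ) * (ω : ℂ))
      (nhdsWithin 1 {γ : ℝ | ∀ n : ℤ, γ ≠ (n : ℝ)})
      (nhds ((α₀ * |ω| : ℝ) +
        Complex.I * (α₀ : ℂ) * ((2 / π : ℝ) : ℂ) * (ω : ℂ)
          * ((Real.log |ω| - Real.log |ω₀| : ℝ) : ℂ))) := by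
  have hS : {γ : ℝ | ∀ n : ℤ, γ ≠ n} ⊆ {1}ᶜ := fun γ hγ => by simpa using hγ 1
  refine Tendsto.mono_left ?_ (nhdsWithin_mono _ hS)
  have hpow : Tendsto (fun γ : ℝ => |ω| ^ γ) (𝓝[≠] 1) (𝓝 |ω|) := by
    simpa using ((Real.continuousAt_const_rpow (abs_ne_zero.2 hω)).tendsto (x := 1)).mono_left
      nhdsWithin_le_nhds
  have htan := tendsto_tan_mul_rpow_sub_rpow (abs_pos.2 hω₀.ne') (abs_pos.2 hω)
  have hlim := ((continuous_ofReal.tendsto _).comp (hpow.const_mul α₀)).add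
    ((tendsto_const_nhds (x := I * α₀ * ω)).mul ((continuous_ofReal.tendsto _).comp htan))
  have hcos_ne := hasDerivAt_cos_pi_mul_div_two.eventually_ne (c := 0) (neg_ne_zero.2 (by positivity))
  convert hlim.congr' (hcos_ne.mono fun γ hγ =>
    (ofReal_mul_neg_I_mul_cpow_div_cos_add hω α₀ |ω₀| hγ).symm) using 2
  push_cast
  ring

theorem alpha_star_limit_gamma_one (α₀ ω₀ ω : ℝ) (hα : 0 < α₀) (hω₀ : 0 < ω₀)
    (hω : ω ≠ 0) :
    Tendsto
      (fun γ : ℝ =>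
        (α₀ : ℂ) * ((-Complex.I) * (ω : ℂ)) ^ (γ : ℂ) / (Real.cos (π * γ / 2) : ℂ)
          + Complex.I * (α₀ : ℂ) * (Real.tan (π * γ / 2) : ℂ)
              * ((|ω₀| ^ (γ - 1) : ℝ) : ℂ) * (ω : ℂ))
      (nhdsWithin 1 {γ : ℝ | ∀ n : ℤ, γ ≠ (n : ℝ)})
      (nhds ((α₀ * |ω| : ℝ) +
        Complex.I * (α₀ : ℂ) * ((2 / π : ℝ) : ℂ) * (ω : ℂ)
          * ((Real.log |ω| - Real.log |ω₀| : ℝ) : ℂ))) :=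
  alpha_star_limit_gamma_one_general α₀ ω₀ ω hω₀ hω
end

section
/- For γ ∈ (0,1) and z = z₁ + i·z₂ with z₂ < 0, the complex number B(z) := √(1 + 2a·(1/(iz))^{1−γ}) − 1 (primitive/principal square root, a > 0 constant) has nonnegative real part, and z₁·Im(B(z)) ≤ 0; consequently z₁·Im(B(z)) + z₂·Re(B(z)) ≤ 0. -/
/-!
Put `w = 1/(iz)`, so `Re w > 0` and `Im w` has the sign opposite to `z₁`. Raising to a real power
`r ∈ [0, 1]` multiplies the argument by `r`, which keeps `|arg| ≤ π/2` and the sign of the imaginary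
part; adding `1` and scaling by `2a > 0` then gives `u` with `Re u ≥ 1` and the same sign of `Im u`.
Finally `s = √u` has `Re s ≥ 1`, and `Im u = 2 Re s · Im s` carries the sign of `Im u` over to `Im s`.
-/

open Complex Real

namespace Complex

lemma re_one_div_I_mul (z : ℂ) : (1 / (I * z)).re = -z.im / normSq z := by
  simp

lemma im_one_div_I_mul (z : ℂ) : (1 / (I * z)).im = -z.re / normSq z := by
  simp [neg_div]

lemma arg_nonpos_of_re_nonneg_of_im_nonpos {w : ℂ} (hre : 0 ≤ w.re) (him : w.im ≤ 0) :
    arg w ≤ 0 := by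
  rcases him.lt_or_eq with him | him
  · exact (arg_neg_iff.2 him).le
  · exact (arg_eq_zero_iff.2 ⟨hre, him⟩).le

section RealPower

variable {w : ℂ} {r : ℝ}

lemma re_cpow_ofReal_nonneg (hw : 0 ≤ w.re) (hr0 : 0 ≤ r) (hr1 : r ≤ 1) :
    0 ≤ (w ^ (r : ℂ)).re := by
  have harg : |arg w * r| ≤ π / 2 := by
    rw [abs_mul, abs_of_nonneg hr0]
    calc |arg w| * r ≤ |arg w| * 1 := by gcongr
      _ ≤ π / 2 := by rw [mul_one]; exact abs_arg_le_pi_div_two_iff.2 hw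
  rw [cpow_ofReal_re]
  exact mul_nonneg (by positivity) (cos_nonneg_of_mem_Icc (abs_le.1 harg))

lemma im_cpow_ofReal_nonneg (hw : 0 ≤ w.im) (hr0 : 0 ≤ r) (hr1 : r ≤ 1) :
    0 ≤ (w ^ (r : ℂ)).im := by
  have harg := arg_nonneg_iff.2 hw
  rw [cpow_ofReal_im]
  exact mul_nonneg (by positivity)
    (sin_nonneg_of_nonneg_of_le_pi (by positivity) (by nlinarith [arg_le_pi w]))

lemma im_cpow_ofReal_nonpos (hw : arg w ≤ 0) (hr0 : 0 ≤ r) (hr1 : r ≤ 1) :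
    (w ^ (r : ℂ)).im ≤ 0 := by
  rw [cpow_ofReal_im]
  exact mul_nonpos_of_nonneg_of_nonpos (by positivity)
    (sin_nonpos_of_nonpos_of_neg_pi_le (mul_nonpos_of_nonpos_of_nonneg hw hr0)
      (by nlinarith [neg_pi_lt_arg w]))

lemma mul_im_cpow_ofReal_nonpos (hw : 0 ≤ w.re) (hr0 : 0 ≤ r) (hr1 : r ≤ 1) {t : ℝ}
    (ht : t * w.im ≤ 0) : t * (w ^ (r : ℂ)).im ≤ 0 := by
  rcases lt_trichotomy t 0 with h | rfl | h
  · exact mul_nonpos_of_nonpos_of_nonneg h.le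
      (im_cpow_ofReal_nonneg (nonneg_of_mul_nonpos_right ht h) hr0 hr1)
  · simp
  · exact mul_nonpos_of_nonneg_of_nonpos h.le (im_cpow_ofReal_nonpos
      (arg_nonpos_of_re_nonneg_of_im_nonpos hw (nonpos_of_mul_nonpos_right ht h)) hr0 hr1)

end RealPower

section SquareRoot

variable {u : ℂ}

lemma one_le_re_cpow_inv_two (hu : 1 ≤ u.re) : 1 ≤ (u ^ (2⁻¹ : ℂ)).re := by
  rw [cpow_inv_two_re, Real.one_le_sqrt]
  linarith [re_le_norm u]

lemma mul_im_cpow_inv_two_nonpos (hu : 0 < u.re) {t : ℝ} (ht : t * u.im ≤ 0) :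
    t * (u ^ (2⁻¹ : ℂ)).im ≤ 0 := by
  set s := u ^ (2⁻¹ : ℂ)
  have hs : 0 < s.re := by
    rw [cpow_inv_two_re, Real.sqrt_pos]
    linarith [re_le_norm u]
  have hu_im : u.im = 2 * s.re * s.im := by
    rw [← cpow_ofNat_inv_pow u 2, pow_two, mul_im]
    ring
  rw [hu_im, mul_left_comm] at ht
  exact nonpos_of_mul_nonpos_right ht (by positivity)

end SquareRoot

end Complex

theorem szabo_B_signs (γ a : ℝ) (hγ0 : 0 < γ) (hγ1 : γ < 1) (ha : 0 < a)
    (z : ℂ) (hz : z.im < 0) :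
    0 ≤ ((1 + 2 * (a : ℂ) * (1 / (Complex.I * z)) ^ ((1 - γ : ℝ) : ℂ)) ^ ((1 : ℂ) / 2) - 1).re ∧
    z.re * ((1 + 2 * (a : ℂ) * (1 / (Complex.I * z)) ^ ((1 - γ : ℝ) : ℂ)) ^ ((1 : ℂ) / 2) - 1).im ≤ 0 ∧
    z.re * ((1 + 2 * (a : ℂ) * (1 / (Complex.I * z)) ^ ((1 - γ : ℝ) : ℂ)) ^ ((1 : ℂ) / 2) - 1).im
      + z.im * ((1 + 2 * (a : ℂ) * (1 / (Complex.I * z)) ^ ((1 - γ : ℝ) : ℂ)) ^ ((1 : ℂ) / 2) - 1).re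
      ≤ 0 := by
  set w := 1 / (I * z)
  have hw_re : 0 ≤ w.re := by
    rw [re_one_div_I_mul]
    exact div_nonneg (by linarith) (normSq_nonneg z)
  have hw_im : z.re * w.im ≤ 0 := by
    rw [im_one_div_I_mul, mul_div_assoc', mul_neg, ← sq]
    exact div_nonpos_of_nonpos_of_nonneg (neg_nonpos.2 (sq_nonneg _)) (normSq_nonneg z)
  set v := w ^ ((1 - γ : ℝ) : ℂ)
  have hv_re : 0 ≤ v.re := re_cpow_ofReal_nonneg hw_re (by linarith) (by linarith)
  have hv_im : z.re * v.im ≤ 0 :=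
    mul_im_cpow_ofReal_nonpos hw_re (by linarith) (by linarith) hw_im
  set u := 1 + 2 * (a : ℂ) * v
  have hu_re : 1 ≤ u.re := by
    have : u.re = 1 + 2 * a * v.re := by simp [u]
    rw [this]
    exact le_add_of_nonneg_right (by positivity)
  have hu_im : z.re * u.im ≤ 0 := by
    have : u.im = 2 * a * v.im := by simp [u]
    rw [this, mul_left_comm]
    exact mul_nonpos_of_nonneg_of_nonpos (by positivity) hv_im
  rw [one_div (2 : ℂ)]
  have hs_re := one_le_re_cpow_inv_two hu_re
  have hs_im := mul_im_cpow_inv_two_nonpos (by linarith) hu_im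
  simp only [sub_re, sub_im, one_re, one_im, sub_zero]
  refine ⟨by linarith, hs_im, by nlinarith⟩
end

section
/- Let γ ∈ (1,2], τ₀ > 0, c₁ > 0, and define α_*(ω) := (−iω)/(c₁·√(1 + (−iτ₀ω)^{γ−1})) for ω in the closed lower half-plane with negative imaginary part. Then for all z = z₁ + iz₂ with z₂ < 0, −Re(α_*(−z)) ≤ 0, i.e. Re(iz / (c₁·√(1 + (iτ₀z)^{γ−1}))) ≥ 0. -/
/-!
For `Re v > 0` and a real exponent `r`, `v ^ r` has argument `r · arg v`; so for `|r| ≤ 1` it stays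
in the open right half-plane, and for `0 < r ≤ 2` its imaginary part keeps the sign of `Im v`.
With `w = i z` (so `Re w > 0`) this applies first to `(τ₀ w) ^ (γ - 1)`, then, after adding `1`,
to the square root. Hence `w` and the denominator `s` both lie in the right half-plane with
imaginary parts of equal sign, and `Re (w / s) = (Re w Re s + Im w Im s) / |s|² ≥ 0`.
-/

open Complex
open scoped Real

lemma Real.sign_sin_of_abs_lt_pi {x : ℝ} (hx : |x| < π) : SignType.sign (sin x) = SignType.sign x := by
  obtain ⟨hlo, hhi⟩ := abs_lt.mp hx
  rcases lt_trichotomy x 0 with hneg | rfl | hpos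
  · rw [_root_.sign_neg hneg, _root_.sign_neg (Real.sin_neg_of_neg_of_neg_pi_lt hneg hlo)]
  · simp
  · rw [_root_.sign_pos hpos, _root_.sign_pos (Real.sin_pos_of_pos_of_lt_pi hpos hhi)]

lemma Complex.sign_arg_of_re_nonneg {v : ℂ} (hv : 0 ≤ v.re) :
    SignType.sign v.arg = SignType.sign v.im := by
  rcases lt_trichotomy v.im 0 with hneg | hzero | hpos
  · rw [sign_neg hneg, sign_neg (arg_neg_iff.mpr hneg)]
  · rw [hzero, arg_eq_zero_iff.mpr ⟨hv, hzero⟩]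
  · rw [sign_pos hpos, sign_pos ((arg_nonneg_iff.mpr hpos.le).lt_of_ne ?_)]
    intro h
    exact hpos.ne' (arg_eq_zero_iff.mp h.symm).2

lemma Complex.re_cpow_ofReal_pos {v : ℂ} (hv : 0 < v.re) {r : ℝ} (hr : |r| ≤ 1) :
    0 < (v ^ (r : ℂ)).re := by
  have hv0 : v ≠ 0 := fun h => by simp [h] at hv
  have harg : |arg v| < π / 2 := abs_arg_lt_pi_div_two_iff.mpr (Or.inl hv)
  have hangle : |arg v * r| < π / 2 := by
    rw [abs_mul]
    calc |arg v| * |r| ≤ |arg v| := mul_le_of_le_one_right (abs_nonneg _) hr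
      _ < π / 2 := harg
  rw [cpow_ofReal_re]
  exact mul_pos (Real.rpow_pos_of_pos (norm_pos_iff.mpr hv0) r)
    (Real.cos_pos_of_mem_Ioo (abs_lt.mp hangle))

lemma Complex.sign_im_cpow_ofReal {v : ℂ} (hv : 0 < v.re) {r : ℝ} (hr0 : 0 < r) (hr2 : r ≤ 2) :
    SignType.sign (v ^ (r : ℂ)).im = SignType.sign v.im := by
  have hv0 : v ≠ 0 := fun h => by simp [h] at hv
  have harg : |arg v| < π / 2 := abs_arg_lt_pi_div_two_iff.mpr (Or.inl hv)
  have hangle : |arg v * r| < π := by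
    rw [abs_mul, abs_of_pos hr0]
    nlinarith [abs_nonneg (arg v)]
  rw [cpow_ofReal_im, sign_mul, sign_pos (Real.rpow_pos_of_pos (norm_pos_iff.mpr hv0) r), one_mul,
    Real.sign_sin_of_abs_lt_pi hangle, sign_mul, sign_pos hr0, mul_one, sign_arg_of_re_nonneg hv.le]

lemma Complex.re_div_nonneg {w s : ℂ} (hw : 0 ≤ w.re) (hs : 0 ≤ s.re)
    (hsign : SignType.sign w.im = SignType.sign s.im) : 0 ≤ (w / s).re := by
  have him : 0 ≤ w.im * s.im := by
    rw [← sign_nonneg_iff, sign_mul, hsign]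
    rcases SignType.sign s.im with _ | _ | _ <;> decide
  rw [div_re]
  exact add_nonneg (div_nonneg (mul_nonneg hw hs) (normSq_nonneg s))
    (div_nonneg him (normSq_nonneg s))

theorem modified_tv_re_nonneg (γ τ₀ c₁ : ℝ) (hγ1 : 1 < γ) (hγ2 : γ ≤ 2)
    (hτ : 0 < τ₀) (hc : 0 < c₁) (z : ℂ) (hz : z.im < 0) :
    0 ≤ (Complex.I * z /
          ((c₁ : ℂ) * (1 + (Complex.I * (τ₀ : ℂ) * z) ^ ((γ - 1 : ℝ) : ℂ)) ^ ((1 : ℂ) / 2))).re := by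
  set w := I * z
  have hw : 0 < w.re := by simpa [w] using hz
  have hτw : 0 < (τ₀ * w).re := by simpa [re_ofReal_mul] using mul_pos hτ hw
  set ξ := ((τ₀ : ℂ) * w) ^ ((γ - 1 : ℝ) : ℂ)
  have hre_one_add : 0 < (1 + ξ).re := by
    have := re_cpow_ofReal_pos hτw (r := γ - 1) (abs_le.mpr ⟨by linarith, by linarith⟩)
    simp only [add_re, one_re]; linarith
  have hsign_one_add : SignType.sign (1 + ξ).im = SignType.sign w.im := by
    rw [add_im, one_im, zero_add, sign_im_cpow_ofReal hτw (by linarith) (by linarith),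
      im_ofReal_mul, sign_mul, sign_pos hτ, one_mul]
  have hhalf : (1 : ℂ) / 2 = ((1 / 2 : ℝ) : ℂ) := by push_cast; rfl
  have hI : I * τ₀ * z = τ₀ * w := by ring
  rw [hI, hhalf]
  apply re_div_nonneg hw.le
  · rw [re_ofReal_mul]
    exact mul_nonneg hc.le (re_cpow_ofReal_pos hre_one_add (by norm_num [abs_of_pos])).le
  · rw [im_ofReal_mul, sign_mul, sign_pos hc, one_mul,
      sign_im_cpow_ofReal hre_one_add (by norm_num) (by norm_num), hsign_one_add]
end
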